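/- For every n × n 0-1 matrix M, st₀(M) + st₁(M) ≥ ⌈n/2⌉ + n − 1, where st₀(M) and st₁(M) denote the maximum lengths of a 0-staircase and a 1-staircase in M respectively. -/

import Mathlib

/-!
Let `v` be a value held by at least half of the last row, `w` the other value, and `b` the first
column in which the last row holds `v`. The `v`-entries of column `b` above the last row, followed
by all `v`-entries of the last row, form a `v`-staircase turning at the corner `(n - 1, b)`; the
`w`-entries of column `b` above the last row form a `w`-staircase. The column contributes `n - 1`
entries in total and the last row at least `⌈n/2⌉`.
-/

/-- A step of a staircase: the next position is strictly to the right in the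
same row, or strictly below in the same column. -/
def Step {n N : ℕ} (p q : Fin n × Fin N) : Prop :=
  (p.1 = q.1 ∧ p.2 < q.2) ∨ (p.2 = q.2 ∧ p.1 < q.1)

/-- A `v`-staircase in the 0-1 matrix `M`: a sequence of positions all holding
the value `v`, each successive one strictly to the right in the same row or
strictly below in the same column of the previous one. -/
def IsStaircase {n N : ℕ} (M : Fin n → Fin N → Fin 2) (v : Fin 2)
    (L : List (Fin n × Fin N)) : Prop :=
  (∀ p ∈ L, M p.1 p.2 = v) ∧ L.Chain' Step

theorem List.length_eq_countP_eq_add_countP_eq {α : Type*} (l : List α) (f : α → Fin 2)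
    {v w : Fin 2} (hvw : v ≠ w) : l.length = l.countP (f · = v) + l.countP (f · = w) := by
  rw [l.length_eq_countP_add_countP (f · = v)]
  congr 1
  refine List.countP_congr fun a _ => ?_
  have hother : ∀ x : Fin 2, ¬x = v ↔ x = w := by revert v w; decide
  simpa using hother (f a)

theorem IsStaircase.append {n N : ℕ} {M : Fin n → Fin N → Fin 2} {v : Fin 2}
    {A B : List (Fin n × Fin N)} (hA : IsStaircase M v A) (hB : IsStaircase M v B)
    (hAB : ∀ p ∈ A.getLast?, ∀ q ∈ B.head?, Step p q) : IsStaircase M v (A ++ B) :=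
  ⟨fun p hp => (List.mem_append.1 hp).elim (hA.1 p) (hB.1 p), hA.2.append hB.2 hAB⟩

section Entries

variable {n N : ℕ} (M : Fin n → Fin N → Fin 2)

def columnEntries (v : Fin 2) (rows : List (Fin n)) (j : Fin N) : List (Fin n × Fin N) :=
  (rows.filter (M · j = v)).map (·, j)

def rowEntries (v : Fin 2) (i : Fin n) (cols : List (Fin N)) : List (Fin n × Fin N) :=
  (cols.filter (M i · = v)).map (i, ·)

theorem isStaircase_columnEntries (v : Fin 2) {rows : List (Fin n)} (j : Fin N)
    (hrows : rows.Pairwise (· < ·)) : IsStaircase M v (columnEntries M v rows j) := by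
  refine ⟨fun p hp => ?_, ?_⟩
  · obtain ⟨i, hi, rfl⟩ := List.mem_map.1 hp
    simpa using List.of_mem_filter hi
  · exact List.Pairwise.isChain (R := Step)
      (.map (·, j) (fun _ _ h => Or.inr ⟨rfl, h⟩) (hrows.sublist List.filter_sublist))

theorem isStaircase_rowEntries (v : Fin 2) (i : Fin n) {cols : List (Fin N)}
    (hcols : cols.Pairwise (· < ·)) : IsStaircase M v (rowEntries M v i cols) := by
  refine ⟨fun p hp => ?_, ?_⟩
  · obtain ⟨j, hj, rfl⟩ := List.mem_map.1 hp
    simpa using List.of_mem_filter hj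
  · exact List.Pairwise.isChain (R := Step)
      (.map (i, ·) (fun _ _ h => Or.inl ⟨rfl, h⟩) (hcols.sublist List.filter_sublist))

theorem length_columnEntries_add_length_columnEntries {v w : Fin 2} (hvw : v ≠ w)
    (rows : List (Fin n)) (j : Fin N) :
    (columnEntries M v rows j).length + (columnEntries M w rows j).length = rows.length := by
  simpa only [columnEntries, List.length_map, ← List.countP_eq_length_filter]
    using (rows.length_eq_countP_eq_add_countP_eq (M · j) hvw).symm

theorem length_rowEntries (v : Fin 2) (i : Fin n) (cols : List (Fin N)) :
    (rowEntries M v i cols).length = cols.countP (M i · = v) := by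
  simp only [rowEntries, List.length_map, List.countP_eq_length_filter]

end Entries

theorem exists_isStaircase_add_countP_le_length {m N : ℕ} (M : Fin (m + 1) → Fin N → Fin 2)
    {v w : Fin 2} (hvw : v ≠ w) (hv : 0 < (List.finRange N).countP (M (Fin.last m) · = v)) :
    ∃ A B, IsStaircase M v A ∧ IsStaircase M w B ∧
      m + (List.finRange N).countP (M (Fin.last m) · = v) ≤ A.length + B.length := by
  obtain ⟨b, cols, hb⟩ :
      ∃ b cols, (List.finRange N).filter (M (Fin.last m) · = v) = b :: cols := by
    rw [List.countP_eq_length_filter] at hv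
    exact List.exists_cons_of_length_pos hv
  set rows := (List.finRange m).map Fin.castSucc
  have hrows : rows.Pairwise (· < ·) :=
    (List.pairwise_lt_finRange m).map _ fun _ _ => Fin.castSucc_lt_castSucc_iff.mpr
  have hcorner : ∀ p ∈ (columnEntries M v rows b).getLast?,
      ∀ q ∈ (rowEntries M v (Fin.last m) (List.finRange N)).head?, Step p q := by
    intro p hp q hq
    obtain ⟨i, hi, rfl⟩ := List.mem_map.1 (List.mem_of_mem_getLast? hp)
    obtain ⟨i, -, rfl⟩ := List.mem_map.1 (List.mem_of_mem_filter hi)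
    simp only [rowEntries, hb, List.map_cons, List.head?_cons, Option.mem_some_iff] at hq
    subst hq
    exact Or.inr ⟨rfl, Fin.castSucc_lt_last i⟩
  refine ⟨columnEntries M v rows b ++ rowEntries M v (Fin.last m) (List.finRange N),
    columnEntries M w rows b,
    (isStaircase_columnEntries M v b hrows).append
      (isStaircase_rowEntries M v _ (List.pairwise_lt_finRange N)) hcorner,
    isStaircase_columnEntries M w b hrows, ?_⟩
  rw [List.length_append, add_right_comm, length_columnEntries_add_length_columnEntries M hvw,
    length_rowEntries]
  simp [rows]

theorem stmt1 (n : ℕ) (M : Fin n → Fin n → Fin 2) :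
    ∃ (L0 L1 : List (Fin n × Fin n)),
      IsStaircase M 0 L0 ∧ IsStaircase M 1 L1 ∧
      (n + 1) / 2 + n - 1 ≤ L0.length + L1.length := by
  rcases n with _ | m
  · exact ⟨[], [], ⟨by simp, .nil⟩, ⟨by simp, .nil⟩, by simp⟩
  have hsplit := (List.finRange (m + 1)).length_eq_countP_eq_add_countP_eq (M (Fin.last m))
    zero_ne_one
  rw [List.length_finRange] at hsplit
  by_cases h0 : (m + 2) / 2 ≤ (List.finRange (m + 1)).countP (M (Fin.last m) · = 0)
  · obtain ⟨A, B, hA, hB, hlen⟩ :=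
      exists_isStaircase_add_countP_le_length M zero_ne_one (by omega)
    exact ⟨A, B, hA, hB, by omega⟩
  · obtain ⟨A, B, hA, hB, hlen⟩ :=
      exists_isStaircase_add_countP_le_length M one_ne_zero (by omega)
    exact ⟨B, A, hB, hA, by omega⟩
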